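/- Let {c_n}_{n≥1} be a complex sequence with lim_{n→∞} c_n = 0, and let {R(n)}_{n≥1} be a non-decreasing positive real sequence that is O-regularly varying, i.e., limsup_{n→∞} R(2n)/R(n) < ∞. Suppose condition (2''): there is a constant M > 0 such that for every m ≥ 1, ∑_{n=m}^{∞} |c_n/R(n) − c_{n+1}/R(n+1)| ≤ M·|c_m|/R(m). Then {c_n} satisfies condition (2*): for every natural number N₀ ≥ 1 there is a constant M' > 0 (depending on c, R, N₀) such that for every m ≥ 1, ∑_{n=m}^{2m} |c_n − c_{n+1}| ≤ M' · max_{m ≤ n < m+N₀} |c_n|. -/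

import Mathlib

open Filter Finset

/-- Theorem 3 of the paper: if a complex null sequence `c` satisfies condition
(2'') with respect to a non-decreasing positive O-regularly varying sequence
`R`, then `c` satisfies condition (2*), for every choice of `N₀ ≥ 1`. -/
theorem theorem3 (c : ℕ → ℂ) (R : ℕ → ℝ)
    (hc0 : Tendsto c atTop (nhds 0))
    (hRpos : ∀ n : ℕ, 1 ≤ n → 0 < R n)
    (hRmono : ∀ n : ℕ, 1 ≤ n → R n ≤ R (n + 1))
    (hORV : ∃ C : ℝ, ∀ᶠ n : ℕ in atTop, R (2 * n) / R n ≤ C)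
    (h2'' : ∃ M : ℝ, 0 < M ∧ ∀ m : ℕ, 1 ≤ m →
      Summable (fun k : ℕ =>
        ‖c (m + k) / (R (m + k) : ℂ) - c (m + k + 1) / (R (m + k + 1) : ℂ)‖) ∧
      ∑' k : ℕ, ‖c (m + k) / (R (m + k) : ℂ) - c (m + k + 1) / (R (m + k + 1) : ℂ)‖
        ≤ M * ‖c m‖ / R m) :
    ∀ N₀ : ℕ, ∀ hN₀ : 1 ≤ N₀, ∃ M' : ℝ, 0 < M' ∧ ∀ m : ℕ, 1 ≤ m →
      ∑ n ∈ Finset.Icc m (2 * m), ‖c n - c (n + 1)‖ ≤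
        M' * (Finset.Ico m (m + N₀)).sup' (Finset.nonempty_Ico.mpr (by omega))
          (fun n => ‖c n‖) := by
  intro N₀ hN₀
  obtain ⟨M, hM, hsum⟩ := h2''
  obtain ⟨C, hC⟩ := hORV
  rw [eventually_atTop] at hC
  obtain ⟨N, hN⟩ := hC
  -- extended monotonicity of R
  have hmono : ∀ a b : ℕ, 1 ≤ a → a ≤ b → R a ≤ R b := by
    intro a b ha hab
    induction b with
    | zero => omega
    | succ b ih =>
      rcases Nat.lt_or_ge a (b + 1) with h | h
      · exact le_trans (ih (by omega)) (hRmono b (by omega))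
      · have : a = b + 1 := by omega
        subst this; rfl
  -- abbreviation for the differences
  set d : ℕ → ℝ := fun n =>
    ‖c n / (R n : ℂ) - c (n + 1) / (R (n + 1) : ℂ)‖ with hd
  have hd_nonneg : ∀ n, 0 ≤ d n := fun n => norm_nonneg _
  -- pointwise bound |c n| / R n ≤ M |c m| / R m for n ≥ m ≥ 1
  have hpt : ∀ m : ℕ, 1 ≤ m → ∀ n : ℕ, m ≤ n →
      ‖c n‖ / R n ≤ M * ‖c m‖ / R m := by
    intro m hm n hn
    have hn1 : 1 ≤ n := le_trans hm hn
    obtain ⟨hsn, htn⟩ := hsum n hn1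
    obtain ⟨hsm, htm⟩ := hsum m hm
    set g : ℕ → ℂ := fun k => c (n + k) / (R (n + k) : ℂ) with hg
    -- g tends to 0
    have hgto : Tendsto g atTop (nhds 0) := by
      have hb : ∀ k, ‖g k‖ ≤ ‖c (n + k)‖ / R n := by
        intro k
        have h1 : 0 < R n := hRpos n hn1
        have h2 : R n ≤ R (n + k) := hmono n (n + k) hn1 (by omega)
        rw [hg]
        simp only [norm_div]
        have : ‖(R (n + k) : ℂ)‖ = R (n + k) := by
          rw [Complex.norm_real, Real.norm_eq_abs, abs_of_pos (lt_of_lt_of_le h1 h2)]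
        rw [this]
        exact div_le_div_of_nonneg_left (norm_nonneg _) h1 h2
      have hcnorm : Tendsto (fun k => ‖c (n + k)‖ / R n) atTop (nhds 0) := by
        have hshift : Tendsto (fun k : ℕ => n + k) atTop atTop :=
          tendsto_atTop_mono (fun k => Nat.le_add_left k n) tendsto_id
        have : Tendsto (fun k => c (n + k)) atTop (nhds 0) := hc0.comp hshift
        have h0 : Tendsto (fun k => ‖c (n + k)‖) atTop (nhds 0) := by
          simpa using this.norm
        simpa using h0.div_const (R n)
      exact tendsto_zero_iff_norm_tendsto_zero.mpr
        (squeeze_zero (fun k => norm_nonneg _) hb hcnorm)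
    -- summable norms of differences
    have hnormsum : Summable (fun k => ‖g k - g (k + 1)‖) := by
      have : (fun k => ‖g k - g (k + 1)‖) = fun k => d (n + k) := by
        funext k
        rfl
      rw [this]
      exact hsn
    -- telescoping has sum g 0
    have hhs : HasSum (fun k => g k - g (k + 1)) (g 0) := by
      rw [hasSum_iff_tendsto_nat_of_summable_norm hnormsum]
      have heq : ∀ K, ∑ i ∈ Finset.range K, (g i - g (i + 1)) = g 0 - g K := fun K =>
        Finset.sum_range_sub' g K
      simp only [heq]
      simpa using tendsto_const_nhds.sub hgto
    -- |g 0| ≤ tail sum from n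
    have habs : ‖g 0‖ ≤ ∑' k, d (n + k) := by
      have h1 : ‖g 0‖ ≤ ∑' k, ‖g k - g (k + 1)‖ := by
        rw [← hhs.tsum_eq]
        exact norm_tsum_le_tsum_norm hnormsum
      have h2 : (fun k => ‖g k - g (k + 1)‖) = fun k => d (n + k) := by
        funext k
        rfl
      rwa [h2] at h1
    -- tail from n ≤ tail from m (shift)
    have hshift : ∑' k, d (n + k) ≤ ∑' k, d (m + k) := by
      obtain ⟨t, rfl⟩ := Nat.exists_eq_add_of_le hn
      have h1 : (fun k => d (m + t + k)) = fun k => d (m + (k + t)) := by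
        funext k; congr 1; omega
      rw [h1]
      have h2 := Summable.sum_add_tsum_nat_add (f := fun k => d (m + k)) t hsm
      have h3 : 0 ≤ ∑ i ∈ Finset.range t, d (m + i) :=
        Finset.sum_nonneg fun i _ => hd_nonneg _
      linarith [h2]
    have hg0 : ‖g 0‖ = ‖c n‖ / R n := by
      rw [hg]
      simp only [Nat.add_zero]
      rw [norm_div, Complex.norm_real, Real.norm_eq_abs, abs_of_pos (hRpos n hn1)]
    calc ‖c n‖ / R n = ‖g 0‖ := hg0.symm
      _ ≤ ∑' k, d (n + k) := habs
      _ ≤ ∑' k, d (m + k) := hshift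
      _ ≤ M * ‖c m‖ / R m := htm
  -- main estimate: the block sum is at most 2 M |c m| (R(2m+1)/R m)
  have hmain : ∀ m : ℕ, 1 ≤ m →
      ∑ n ∈ Finset.Icc m (2 * m), ‖c n - c (n + 1)‖ ≤
        2 * M * ‖c m‖ * (R (2 * m + 1) / R m) := by
    intro m hm
    obtain ⟨hsm, htm⟩ := hsum m hm
    have hRm : 0 < R m := hRpos m hm
    have hR2m1 : 0 < R (2 * m + 1) := hRpos _ (by omega)
    -- pointwise estimate for each n in the block
    have hterm : ∀ n, m ≤ n → n ≤ 2 * m →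
        ‖c n - c (n + 1)‖ ≤
          R (2 * m + 1) * d n + (M * ‖c m‖ / R m) * (R (n + 1) - R n) := by
      intro n hmn hn2m
      have hn1 : 1 ≤ n := le_trans hm hmn
      have hRn : 0 < R n := hRpos n hn1
      have hRn1 : 0 < R (n + 1) := hRpos _ (by omega)
      have hsplit : c n - c (n + 1) =
          (R n : ℂ) * (c n / (R n : ℂ) - c (n + 1) / (R (n + 1) : ℂ)) +
            c (n + 1) * ((R n : ℂ) / (R (n + 1) : ℂ) - 1) := by
        have hRn0 : (R n : ℂ) ≠ 0 := Complex.ofReal_ne_zero.mpr hRn.ne'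
        have hRn10 : (R (n + 1) : ℂ) ≠ 0 := Complex.ofReal_ne_zero.mpr hRn1.ne'
        field_simp
        ring
      have h1 : ‖c n - c (n + 1)‖ ≤
          ‖(R n : ℂ) * (c n / (R n : ℂ) - c (n + 1) / (R (n + 1) : ℂ))‖ +
          ‖c (n + 1) * ((R n : ℂ) / (R (n + 1) : ℂ) - 1)‖ := by
        rw [hsplit]; exact norm_add_le _ _
      have h2 : ‖(R n : ℂ) * (c n / (R n : ℂ) - c (n + 1) / (R (n + 1) : ℂ))‖
          = R n * d n := by
        rw [norm_mul, Complex.norm_real, Real.norm_eq_abs, abs_of_pos hRn]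
      have h3 : ‖c (n + 1) * ((R n : ℂ) / (R (n + 1) : ℂ) - 1)‖
          = ‖c (n + 1)‖ * ((R (n + 1) - R n) / R (n + 1)) := by
        rw [norm_mul]
        congr 1
        have : ((R n : ℂ) / (R (n + 1) : ℂ) - 1) = ((R n / R (n + 1) - 1 : ℝ) : ℂ) := by
          push_cast; ring
        rw [this, Complex.norm_real, Real.norm_eq_abs, abs_of_nonpos, neg_sub]
        · field_simp
        · have : R n / R (n + 1) ≤ 1 := by
            rw [div_le_one hRn1]; exact hRmono n hn1
          linarith
      have h4 : R n * d n ≤ R (2 * m + 1) * d n :=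
        mul_le_mul_of_nonneg_right (hmono n (2 * m + 1) hn1 (by omega)) (hd_nonneg n)
      have h5 : ‖c (n + 1)‖ * ((R (n + 1) - R n) / R (n + 1)) ≤
          (M * ‖c m‖ / R m) * (R (n + 1) - R n) := by
        have hb := hpt m hm (n + 1) (by omega)
        have hnn : 0 ≤ R (n + 1) - R n := by linarith [hRmono n hn1]
        calc ‖c (n + 1)‖ * ((R (n + 1) - R n) / R (n + 1))
            = (‖c (n + 1)‖ / R (n + 1)) * (R (n + 1) - R n) := by ring
          _ ≤ (M * ‖c m‖ / R m) * (R (n + 1) - R n) :=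
              mul_le_mul_of_nonneg_right hb hnn
      calc ‖c n - c (n + 1)‖
          ≤ ‖(R n : ℂ) * (c n / (R n : ℂ) - c (n + 1) / (R (n + 1) : ℂ))‖ +
            ‖c (n + 1) * ((R n : ℂ) / (R (n + 1) : ℂ) - 1)‖ := h1
        _ = R n * d n + ‖c (n + 1)‖ * ((R (n + 1) - R n) / R (n + 1)) := by
            rw [h2, h3]
        _ ≤ R (2 * m + 1) * d n + (M * ‖c m‖ / R m) * (R (n + 1) - R n) := by
            exact add_le_add h4 h5
    -- sum the pointwise estimates
    have hstep : ∑ n ∈ Finset.Icc m (2 * m), ‖c n - c (n + 1)‖ ≤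
        ∑ n ∈ Finset.Icc m (2 * m),
          (R (2 * m + 1) * d n + (M * ‖c m‖ / R m) * (R (n + 1) - R n)) := by
      apply Finset.sum_le_sum
      intro n hn
      rw [Finset.mem_Icc] at hn
      exact hterm n hn.1 hn.2
    rw [Finset.sum_add_distrib] at hstep
    -- bound the first sum
    have hfirst : ∑ n ∈ Finset.Icc m (2 * m), R (2 * m + 1) * d n ≤
        R (2 * m + 1) * (M * ‖c m‖ / R m) := by
      rw [← Finset.mul_sum]
      apply mul_le_mul_of_nonneg_left _ (le_of_lt hR2m1)
      have hre : ∑ n ∈ Finset.Icc m (2 * m), d n =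
          ∑ k ∈ Finset.range (m + 1), d (m + k) := by
        have hidx : 2 * m + 1 - m = m + 1 := by omega
        rw [← Finset.Ico_add_one_right_eq_Icc, Finset.sum_Ico_eq_sum_range, hidx]
      rw [hre]
      calc ∑ k ∈ Finset.range (m + 1), d (m + k)
          ≤ ∑' k, d (m + k) := hsm.sum_le_tsum _ (fun i _ => hd_nonneg _)
        _ ≤ M * ‖c m‖ / R m := htm
    -- bound the second sum (telescoping)
    have hsecond : ∑ n ∈ Finset.Icc m (2 * m),
        (M * ‖c m‖ / R m) * (R (n + 1) - R n) =
        (M * ‖c m‖ / R m) * (R (2 * m + 1) - R m) := by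
      rw [← Finset.mul_sum]
      congr 1
      rw [← Finset.Ico_add_one_right_eq_Icc, Finset.sum_Ico_eq_sum_range]
      have h1 : 2 * m + 1 - m = m + 1 := by omega
      rw [h1]
      have h2 : ∀ k, R (m + k + 1) - R (m + k) =
          (fun i => R (m + i)) (k + 1) - (fun i => R (m + i)) k := by
        intro k; simp only []; congr 2 <;> omega
      calc ∑ k ∈ Finset.range (m + 1), (R (m + k + 1) - R (m + k))
          = ∑ k ∈ Finset.range (m + 1),
              ((fun i => R (m + i)) (k + 1) - (fun i => R (m + i)) k) := by
            exact Finset.sum_congr rfl fun k _ => h2 k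
        _ = R (m + (m + 1)) - R (m + 0) := Finset.sum_range_sub (fun i => R (m + i)) (m + 1)
        _ = R (2 * m + 1) - R m := by congr 2 <;> omega
    have hcm : 0 ≤ ‖c m‖ := norm_nonneg _
    have hRle : R (2 * m + 1) - R m ≤ R (2 * m + 1) := by linarith
    have hfac : 0 ≤ M * ‖c m‖ / R m :=
      div_nonneg (mul_nonneg (le_of_lt hM) hcm) (le_of_lt hRm)
    calc ∑ n ∈ Finset.Icc m (2 * m), ‖c n - c (n + 1)‖
        ≤ (∑ n ∈ Finset.Icc m (2 * m), R (2 * m + 1) * d n) +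
          ∑ n ∈ Finset.Icc m (2 * m),
            (M * ‖c m‖ / R m) * (R (n + 1) - R n) := hstep
      _ ≤ R (2 * m + 1) * (M * ‖c m‖ / R m) +
          (M * ‖c m‖ / R m) * (R (2 * m + 1) - R m) := by
          rw [hsecond]; exact add_le_add_left hfirst _
      _ ≤ R (2 * m + 1) * (M * ‖c m‖ / R m) +
          (M * ‖c m‖ / R m) * R (2 * m + 1) := by
          exact add_le_add_right (mul_le_mul_of_nonneg_left hRle hfac) _
      _ = 2 * M * ‖c m‖ * (R (2 * m + 1) / R m) := by
          field_simp; ring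
  -- uniform bound for R(2m+1)/R m
  set K : ℕ := max N 1 with hK
  have hK1 : 1 ≤ K := le_max_right N 1
  have hCpos : 0 < C := by
    have h1 : R (2 * K) / R K ≤ C := hN K (le_max_left N 1)
    have h2 : 0 < R (2 * K) / R K :=
      div_pos (hRpos _ (by omega)) (hRpos _ hK1)
    linarith
  have hne : (Finset.Icc 1 K).Nonempty := ⟨1, Finset.mem_Icc.mpr ⟨le_refl 1, hK1⟩⟩
  set B : ℝ := max (C ^ 2) ((Finset.Icc 1 K).sup' hne (fun m => R (2 * m + 1) / R m)) with hB
  have hBQ : ∀ m : ℕ, 1 ≤ m → R (2 * m + 1) / R m ≤ B := by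
    intro m hm
    rcases le_or_gt m K with h | h
    · exact le_trans (Finset.le_sup' (fun m => R (2 * m + 1) / R m)
        (Finset.mem_Icc.mpr ⟨hm, h⟩)) (le_max_right _ _)
    · have hmN : N ≤ m := le_trans (le_max_left N 1) (le_of_lt h)
      have hm2 : 2 ≤ m := by omega
      have hRm : 0 < R m := hRpos m hm
      have e1 : R (2 * m + 1) ≤ R (2 * (m + 1)) := by
        have := hRmono (2 * m + 1) (by omega)
        have h2 : 2 * m + 1 + 1 = 2 * (m + 1) := by omega
        rwa [h2] at this
      have e2 : R (2 * (m + 1)) ≤ C * R (m + 1) := by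
        have := hN (m + 1) (by omega)
        rwa [div_le_iff₀ (hRpos _ (by omega))] at this
      have e3 : R (m + 1) ≤ R (2 * m) := hmono (m + 1) (2 * m) (by omega) (by omega)
      have e4 : R (2 * m) ≤ C * R m := by
        have := hN m hmN
        rwa [div_le_iff₀ hRm] at this
      have : R (2 * m + 1) ≤ C ^ 2 * R m := by
        calc R (2 * m + 1) ≤ C * R (m + 1) := le_trans e1 e2
          _ ≤ C * R (2 * m) := mul_le_mul_of_nonneg_left e3 (le_of_lt hCpos)
          _ ≤ C * (C * R m) := mul_le_mul_of_nonneg_left e4 (le_of_lt hCpos)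
          _ = C ^ 2 * R m := by ring
      have : R (2 * m + 1) / R m ≤ C ^ 2 := by
        rw [div_le_iff₀ hRm]; exact this
      exact le_trans this (le_max_left _ _)
  have hBpos : 0 < B := lt_of_lt_of_le (pow_pos hCpos 2) (le_max_left _ _)
  refine ⟨2 * M * B, by positivity, ?_⟩
  intro m hm
  have hcm : 0 ≤ ‖c m‖ := norm_nonneg _
  have hmem : m ∈ Finset.Ico m (m + N₀) := Finset.mem_Ico.mpr ⟨le_refl m, by omega⟩
  have hle : ‖c m‖ ≤
      (Finset.Ico m (m + N₀)).sup' (Finset.nonempty_Ico.mpr (by omega))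
        (fun n => ‖c n‖) :=
    Finset.le_sup' (fun n => ‖c n‖) hmem
  calc ∑ n ∈ Finset.Icc m (2 * m), ‖c n - c (n + 1)‖
      ≤ 2 * M * ‖c m‖ * (R (2 * m + 1) / R m) := hmain m hm
    _ ≤ 2 * M * ‖c m‖ * B := by
        apply mul_le_mul_of_nonneg_left (hBQ m hm)
        positivity
    _ = 2 * M * B * ‖c m‖ := by ring
    _ ≤ 2 * M * B * ((Finset.Ico m (m + N₀)).sup' (Finset.nonempty_Ico.mpr (by omega))
          (fun n => ‖c n‖)) := by
        apply mul_le_mul_of_nonneg_left hle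
        positivity
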